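/- Let C = (c_ij) be an n×n nonnegative matrix with row-sums r_1 ≥ ... ≥ r_n, let 1 ≤ t < n, let d = max_{t<i≤n} c_ii and f = max over entries c_ij with t < j ≤ n and i ≠ j. Assume 0 < r_n − (n−t−1)f − d ≤ r_t − (n−t)f. Then ρ(C) ≥ (r_t − f + d + sqrt((r_t − (2n−2t−1)f − d)^2 + 4(n−t)f(r_n − (n−t−1)f − d)))/2. -/

import Mathlib

/-- Spectral radius of a real square matrix: maximum modulus of its complex eigenvalues. -/
noncomputable def specRad {n : ℕ} (A : Matrix (Fin n) (Fin n) ℝ) : ℝ :=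
  ((A.map (fun x => (x : ℂ))).charpoly.roots.map (fun z => ‖z‖)).foldr max 0

/-!
Write `m = n - t` and let `ρ₂` be the larger eigenvalue of the quotient matrix
`M = !![r_t - m f, m f; r_n - (m - 1) f - d, (m - 1) f + d]`, which is the bound in question.
Its eigenvector can be taken to be `(1, α)` with `0 < α ≤ 1`. The vector `x` equal to `1` on the
first `t` coordinates and to `α` on the last `m` satisfies `ρ₂ x ≤ C x` entrywise: a row sum is at
least `r_t` resp. `r_n`, and the mass a row puts on the last `m` columns is at most `m f`
resp. `(m - 1) f + d`, so the two kinds of rows behave at least as well as the two rows of `M`.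
Subinvariance then gives `ρ₂ ≤ ρ(C)`: iterating, `ρ₂ ^ k ≤ ‖C ^ k‖` in the `ℓ∞` operator norm,
and Gelfand's formula turns this into a bound on the spectral radius.
-/

open Matrix Filter Finset

theorem Multiset.le_foldr_max {a : ℝ} {s : Multiset ℝ} (h : a ∈ s) : a ≤ s.foldr max 0 := by
  induction s using Multiset.induction_on with
  | empty => simp at h
  | cons b s ih =>
    rw [Multiset.foldr_cons]
    rcases Multiset.mem_cons.mp h with rfl | h
    · exact le_max_left _ _
    · exact le_max_of_le_right (ih h)

theorem Multiset.foldr_max_nonneg (s : Multiset ℝ) : 0 ≤ s.foldr max 0 := by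
  induction s using Multiset.induction_on with
  | empty => simp
  | cons a s ih => rw [Multiset.foldr_cons]; exact le_max_of_le_right ih

theorem specRad_nonneg {n : ℕ} (A : Matrix (Fin n) (Fin n) ℝ) : 0 ≤ specRad A :=
  Multiset.foldr_max_nonneg _

theorem spectralRadius_map_ofReal_le_specRad {n : ℕ} (A : Matrix (Fin n) (Fin n) ℝ) :
    spectralRadius ℂ (A.map ((↑) : ℝ → ℂ)) ≤ ENNReal.ofReal (specRad A) := by
  refine iSup₂_le fun μ hμ => ?_
  rw [mem_spectrum_iff_isRoot_charpoly, ← Polynomial.mem_roots (charpoly_monic _).ne_zero] at hμ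
  rw [← ENNReal.ofReal_coe_nnreal, coe_nnnorm]
  exact ENNReal.ofReal_le_ofReal (Multiset.le_foldr_max (Multiset.mem_map_of_mem _ hμ))

theorem ofReal_le_spectralRadius_of_pow_le_norm_pow {A : Type*} [NormedRing A] [NormedAlgebra ℂ A]
    [CompleteSpace A] (a : A) {r : ℝ} (hr : 0 ≤ r) (h : ∀ k : ℕ, r ^ k ≤ ‖a ^ k‖) :
    ENNReal.ofReal r ≤ spectralRadius ℂ a := by
  refine ge_of_tendsto (spectrum.pow_norm_pow_one_div_tendsto_nhds_spectralRadius a) ?_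
  filter_upwards [eventually_ne_atTop 0] with k hk
  refine ENNReal.ofReal_le_ofReal ?_
  calc r = (r ^ k) ^ (1 / k : ℝ) := by rw [one_div, Real.pow_rpow_inv_natCast hr hk]
    _ ≤ ‖a ^ k‖ ^ (1 / k : ℝ) := by gcongr; exact h k

section LinftyOpNorm

attribute [local instance] Matrix.linftyOpNormedAddCommGroup Matrix.linftyOpNormedRing
  Matrix.linftyOpNormedAlgebra

variable {ι : Type*} [Fintype ι]

theorem Matrix.linfty_opNorm_map_ofReal (A : Matrix ι ι ℝ) : ‖A.map ((↑) : ℝ → ℂ)‖ = ‖A‖ := by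
  simp [linfty_opNorm_def]

theorem Matrix.pow_smul_le_pow_mulVec [DecidableEq ι] {C : Matrix ι ι ℝ}
    (hC : ∀ i j, 0 ≤ C i j) {x : ι → ℝ} {r : ℝ} (hr : 0 ≤ r) (h : r • x ≤ C *ᵥ x) (k : ℕ) :
    r ^ k • x ≤ (C ^ k) *ᵥ x := by
  induction k with
  | zero => simp
  | succ k ih =>
    have hmono : ∀ {u v : ι → ℝ}, u ≤ v → C *ᵥ u ≤ C *ᵥ v := fun huv i =>
      Finset.sum_le_sum fun j _ => mul_le_mul_of_nonneg_left (huv j) (hC i j)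
    calc r ^ (k + 1) • x = r ^ k • (r • x) := by rw [pow_succ, mul_smul]
      _ ≤ r ^ k • (C *ᵥ x) := smul_le_smul_of_nonneg_left h (pow_nonneg hr k)
      _ = C *ᵥ (r ^ k • x) := (mulVec_smul C _ x).symm
      _ ≤ C *ᵥ ((C ^ k) *ᵥ x) := hmono ih
      _ = (C ^ (k + 1)) *ᵥ x := by rw [mulVec_mulVec, pow_succ']

theorem Matrix.pow_le_linfty_opNorm_pow [DecidableEq ι] {C : Matrix ι ι ℝ}
    (hC : ∀ i j, 0 ≤ C i j) {x : ι → ℝ} (hx : 0 ≤ x) (hx0 : x ≠ 0) {r : ℝ} (hr : 0 ≤ r)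
    (h : r • x ≤ C *ᵥ x) (k : ℕ) :
    r ^ k ≤ ‖C ^ k‖ := by
  have hxpos : 0 < ‖x‖ := norm_pos_iff.mpr hx0
  have hrx : 0 ≤ r ^ k • x := smul_nonneg (pow_nonneg hr k) hx
  refine le_of_mul_le_mul_right ?_ hxpos
  calc r ^ k * ‖x‖ = ‖r ^ k • x‖ := by rw [norm_smul, Real.norm_of_nonneg (pow_nonneg hr k)]
    _ ≤ ‖(C ^ k) *ᵥ x‖ := (pi_norm_le_iff_of_nonneg (norm_nonneg _)).2 fun i =>
        calc ‖(r ^ k • x) i‖ = (r ^ k • x) i := Real.norm_of_nonneg (hrx i)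
          _ ≤ ((C ^ k) *ᵥ x) i := pow_smul_le_pow_mulVec hC hr h k i
          _ ≤ ‖(C ^ k) *ᵥ x‖ := (Real.le_norm_self _).trans (norm_le_pi_norm _ i)
    _ ≤ ‖C ^ k‖ * ‖x‖ := linfty_opNorm_mulVec _ _

theorem le_specRad_of_smul_le_mulVec {n : ℕ} {C : Matrix (Fin n) (Fin n) ℝ}
    (hC : ∀ i j, 0 ≤ C i j) {x : Fin n → ℝ} (hx : 0 ≤ x) (hx0 : x ≠ 0) {r : ℝ}
    (h : r • x ≤ C *ᵥ x) : r ≤ specRad C := by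
  rcases lt_or_ge r 0 with hr | hr
  · exact hr.le.trans (specRad_nonneg C)
  rw [← ENNReal.ofReal_le_ofReal_iff (specRad_nonneg C)]
  refine (ofReal_le_spectralRadius_of_pow_le_norm_pow _ hr fun k => ?_).trans
    (spectralRadius_map_ofReal_le_specRad C)
  have hpow : C.map ((↑) : ℝ → ℂ) ^ k = (C ^ k).map (↑) :=
    (map_pow (Complex.ofRealHom.mapMatrix (m := Fin n)) C k).symm
  rw [hpow]
  exact (pow_le_linfty_opNorm_pow hC hx hx0 hr h k).trans_eq (linfty_opNorm_map_ofReal _).symm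

end LinftyOpNorm

/-- The larger eigenvalue of `!![a, b; c, e]`. -/
noncomputable def perronRoot₂ (a b c e : ℝ) : ℝ := (a + e + √((a - e) ^ 2 + 4 * b * c)) / 2

section PerronRoot₂

variable {a b c e : ℝ}

theorem le_perronRoot₂_left (hbc : 0 ≤ b * c) : a ≤ perronRoot₂ a b c e := by
  have := Real.sqrt_le_sqrt (show (a - e) ^ 2 ≤ (a - e) ^ 2 + 4 * b * c by linarith)
  rw [Real.sqrt_sq_eq_abs] at this
  unfold perronRoot₂; linarith [le_abs_self (a - e)]

theorem perronRoot₂_sub_mul_sub (hbc : 0 ≤ b * c) :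
    (perronRoot₂ a b c e - a) * (perronRoot₂ a b c e - e) = b * c := by
  have := Real.sq_sqrt (show 0 ≤ (a - e) ^ 2 + 4 * b * c by nlinarith [sq_nonneg (a - e)])
  unfold perronRoot₂; linear_combination this / 4

theorem add_le_perronRoot₂ (hb : 0 ≤ b) (hc : 0 < c) (h : c + e ≤ a + b) :
    c + e ≤ perronRoot₂ a b c e := by
  have hbc : 0 ≤ b * c := mul_nonneg hb hc.le
  have ha := le_perronRoot₂_left (a := a) (e := e) hbc
  have hq := perronRoot₂_sub_mul_sub (a := a) (e := e) hbc
  by_contra! hlt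
  -- otherwise `0 ≤ ρ - a < b` and `ρ - e < c`, so `(ρ - a) * (ρ - e) < b * c`
  nlinarith

theorem exists_perronRoot₂_eigenvector (hb : 0 ≤ b) (hc : 0 < c) (h : c + e ≤ a + b) :
    ∃ α : ℝ, 0 < α ∧ α ≤ 1 ∧ a + α * b = perronRoot₂ a b c e ∧
      c + α * e = α * perronRoot₂ a b c e := by
  set ρ := perronRoot₂ a b c e
  have hce : c + e ≤ ρ := add_le_perronRoot₂ hb hc h
  have hρe : 0 < ρ - e := by linarith
  have hq : (ρ - a) * (ρ - e) = b * c := perronRoot₂_sub_mul_sub (mul_nonneg hb hc.le)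
  refine ⟨c / (ρ - e), div_pos hc hρe, (div_le_one hρe).2 (by linarith), ?_, ?_⟩
  · field_simp
    linear_combination -hq
  · field_simp
    ring

end PerronRoot₂

theorem Matrix.mulVec_ite_mem {ι : Type*} [Fintype ι] [DecidableEq ι] (C : Matrix ι ι ℝ)
    (T : Finset ι) (α : ℝ) (i : ι) :
    (C *ᵥ fun j => if j ∈ T then α else 1) i = ∑ j, C i j - (1 - α) * ∑ j ∈ T, C i j := by
  have hsplit : ∀ j, C i j * (if j ∈ T then α else 1) =
      C i j - (1 - α) * if j ∈ T then C i j else 0 := fun j => by split_ifs <;> ring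
  simp only [mulVec, dotProduct, hsplit, Finset.sum_sub_distrib, ← Finset.mul_sum,
    Finset.sum_ite_mem, Finset.univ_inter]

theorem Finset.sum_le_card_sub_one_mul_add {ι : Type*} [DecidableEq ι] {s : Finset ι}
    {g : ι → ℝ} {i : ι} {f d : ℝ} (hi : i ∈ s) (hoff : ∀ j ∈ s, j ≠ i → g j ≤ f) (hd : g i ≤ d) :
    ∑ j ∈ s, g j ≤ (#s - 1) * f + d := by
  have hrest := Finset.sum_le_card_nsmul (s.erase i) g f
    fun j hj => hoff j (mem_of_mem_erase hj) (ne_of_mem_erase hj)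
  rw [card_erase_of_mem hi, nsmul_eq_mul, Nat.cast_sub (card_pos.2 ⟨i, hi⟩), Nat.cast_one] at hrest
  rw [← add_sum_erase s g hi]
  linarith

theorem perronRoot₂_le_specRad {n : ℕ} [NeZero n] {C : Matrix (Fin n) (Fin n) ℝ}
    (hC : ∀ i j, 0 ≤ C i j) (T : Finset (Fin n)) {a b c e : ℝ} (hb : 0 ≤ b) (hc : 0 < c)
    (h : c + e ≤ a + b)
    (hout : ∀ i ∉ T, a + b ≤ ∑ j, C i j ∧ ∑ j ∈ T, C i j ≤ b)
    (hin : ∀ i ∈ T, c + e ≤ ∑ j, C i j ∧ ∑ j ∈ T, C i j ≤ e) :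
    perronRoot₂ a b c e ≤ specRad C := by
  obtain ⟨α, hα0, hα1, hρa, hρc⟩ := exists_perronRoot₂_eigenvector hb hc h
  set x : Fin n → ℝ := fun j => if j ∈ T then α else 1
  have hx : ∀ j, 0 < x j := fun j => by by_cases hj : j ∈ T <;> simp [x, hj, hα0]
  refine le_specRad_of_smul_le_mulVec hC (fun j => (hx j).le)
    (fun hx0 => (hx 0).ne' (congr_fun hx0 0)) fun i => ?_
  rw [Pi.smul_apply, smul_eq_mul, mulVec_ite_mem]
  by_cases hi : i ∈ T
  · obtain ⟨hrow, hT⟩ := hin i hi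
    have := mul_le_mul_of_nonneg_left hT (sub_nonneg.2 hα1)
    simp only [x, if_pos hi]
    linarith
  · obtain ⟨hrow, hT⟩ := hout i hi
    have := mul_le_mul_of_nonneg_left hT (sub_nonneg.2 hα1)
    simp only [x, if_neg hi]
    linarith

theorem stmt_18 {n : ℕ} (C : Matrix (Fin n) (Fin n) ℝ)
    (hC : ∀ i j, 0 ≤ C i j)
    (r : Fin n → ℝ) (hrdef : ∀ i, r i = ∑ j, C i j)
    (hsorted : ∀ i j : Fin n, i ≤ j → r j ≤ r i)
    (t : ℕ) (htn : t < n) (d f : ℝ)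
    (hd : IsGreatest {x : ℝ | ∃ i : Fin n, t ≤ (i : ℕ) ∧ x = C i i} d)
    (hf : IsGreatest {x : ℝ | ∃ i j : Fin n, t ≤ (j : ℕ) ∧ i ≠ j ∧ x = C i j} f)
    (hpos : 0 < r ⟨n - 1, by omega⟩ - ((n : ℝ) - t - 1) * f - d) :
    (r ⟨t - 1, by omega⟩ - f + d +
      Real.sqrt ((r ⟨t - 1, by omega⟩ - (2 * (n : ℝ) - 2 * t - 1) * f - d) ^ 2 +
        4 * ((n : ℝ) - t) * f *
          (r ⟨n - 1, by omega⟩ - ((n : ℝ) - t - 1) * f - d))) / 2 ≤ specRad C := by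
  have : NeZero n := ⟨by omega⟩
  set T : Finset (Fin n) := Ici ⟨t, htn⟩
  have hmemT (j : Fin n) : j ∈ T ↔ t ≤ (j : ℕ) := by simp [T, Fin.le_def]
  have hcard : (#T : ℝ) = n - t := by simp [T, Nat.cast_sub htn.le]
  have hf0 : 0 ≤ f := by
    obtain ⟨i, j, -, -, rfl⟩ := hf.1
    exact hC i j
  have hoff (i : Fin n) : ∀ j ∈ T, j ≠ i → C i j ≤ f :=
    fun j hj hji => hf.2 ⟨i, j, (hmemT j).1 hj, hji.symm, rfl⟩
  have hsorted' (i : Fin n) (k : ℕ) (hk : k < n) (hik : (i : ℕ) ≤ k) : r ⟨k, hk⟩ ≤ r i :=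
    hsorted _ _ (Fin.le_def.2 hik)
  have hout (i : Fin n) (hi : i ∉ T) :
      r ⟨t - 1, by omega⟩ - ((n : ℝ) - t) * f + ((n : ℝ) - t) * f ≤ ∑ j, C i j ∧
        ∑ j ∈ T, C i j ≤ ((n : ℝ) - t) * f := by
    have hit : (i : ℕ) ≤ t - 1 := by have := mt (hmemT i).2 hi; omega
    refine ⟨by linarith [hrdef i, hsorted' i (t - 1) (by omega) hit], ?_⟩
    rw [← hcard, ← nsmul_eq_mul]
    exact sum_le_card_nsmul _ _ _ fun j hj => hoff i j hj (ne_of_mem_of_not_mem hj hi)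
  have hin (i : Fin n) (hi : i ∈ T) :
      r ⟨n - 1, by omega⟩ - ((n : ℝ) - t - 1) * f - d + (((n : ℝ) - t - 1) * f + d) ≤
        ∑ j, C i j ∧ ∑ j ∈ T, C i j ≤ ((n : ℝ) - t - 1) * f + d := by
    refine ⟨by linarith [hrdef i, hsorted' i (n - 1) (by omega) (by omega)], ?_⟩
    rw [← hcard]
    exact sum_le_card_sub_one_mul_add hi (hoff i) (hd.2 ⟨i, (hmemT i).1 hi, rfl⟩)
  have hrows : r ⟨n - 1, by omega⟩ ≤ r ⟨t - 1, by omega⟩ :=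
    hsorted' _ _ _ (Nat.sub_le_sub_right htn.le 1)
  convert perronRoot₂_le_specRad hC T
    (mul_nonneg (sub_nonneg.2 (Nat.cast_le.2 htn.le)) hf0) hpos (by linarith) hout hin using 1
  unfold perronRoot₂
  ring_nf
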